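/- arXiv:1710.05383 — 3 statements merged into one kernel-verified Lean document; each statement's English description precedes it below -/
import Mathlib

section
/- Let $B = (b_{ij}^{\alpha\beta})$ be a 4-tensor on $\mathbb{R}^{d\times d}$ satisfying the symmetries $b_{ij}^{\alpha\beta} = b_{ji}^{\beta\alpha} = b_{\alpha j}^{i\beta}$ and the elasticity ellipticity condition $\mu|\xi|^2 \le b_{ij}^{\alpha\beta}\xi_i^\alpha \xi_j^\beta \le \mu^{-1}|\xi|^2$ for all symmetric matrices $\xi = (\xi_i^\alpha) \in \mathbb{R}^{d\times d}$. Define $\tilde b_{ij}^{\alpha\beta} = b_{ij}^{\alpha\beta} + \frac{\mu}{2}\delta_{i\alpha}\delta_{j\beta} - \frac{\mu}{2}\delta_{i\beta}\delta_{j\alpha}$. Then there exists $\mu' > 0$ such that $\mu'|\xi|^2 \le \tilde b_{ij}^{\alpha\beta}\xi_i^\alpha \xi_j^\beta$ for all (not necessarily symmetric) matrices $\xi \in \mathbb{R}^{d\times d}$. -/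
open scoped BigOperators
open Matrix

lemma sum4_13 {d : ℕ} (f : Fin d → Fin d → Fin d → Fin d → ℝ) :
    ∑ i, ∑ j, ∑ α, ∑ β, f i j α β = ∑ i, ∑ j, ∑ α, ∑ β, f α j i β := by
  calc ∑ i, ∑ j, ∑ α, ∑ β, f i j α β
      = ∑ i, ∑ α, ∑ j, ∑ β, f i j α β :=
        Finset.sum_congr rfl fun i _ => Finset.sum_comm
    _ = ∑ α, ∑ i, ∑ j, ∑ β, f i j α β := Finset.sum_comm
    _ = ∑ α, ∑ j, ∑ i, ∑ β, f i j α β :=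
        Finset.sum_congr rfl fun α _ => Finset.sum_comm

lemma sum4_24 {d : ℕ} (f : Fin d → Fin d → Fin d → Fin d → ℝ) :
    ∑ i, ∑ j, ∑ α, ∑ β, f i j α β = ∑ i, ∑ j, ∑ α, ∑ β, f i β α j := by
  refine Finset.sum_congr rfl fun i _ => ?_
  calc ∑ j, ∑ α, ∑ β, f i j α β
      = ∑ j, ∑ β, ∑ α, f i j α β :=
        Finset.sum_congr rfl fun j _ => Finset.sum_comm
    _ = ∑ β, ∑ j, ∑ α, f i j α β := Finset.sum_comm
    _ = ∑ β, ∑ α, ∑ j, f i j α β :=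
        Finset.sum_congr rfl fun β _ => Finset.sum_comm

/-- reducing the elasticity tensor to a strongly elliptic one. -/
theorem stmt_0 (d : ℕ) (μ : ℝ) (hμ : 0 < μ)
    (b : Fin d → Fin d → Fin d → Fin d → ℝ)
    (hsym1 : ∀ i j α β, b i j α β = b j i β α)
    (hsym2 : ∀ i j α β, b i j α β = b α j i β)
    (hell : ∀ ξ : Matrix (Fin d) (Fin d) ℝ, ξ.IsSymm →
      μ * (∑ i, ∑ α, (ξ i α) ^ 2) ≤
        (∑ i, ∑ j, ∑ α, ∑ β, b i j α β * ξ i α * ξ j β) ∧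
      (∑ i, ∑ j, ∑ α, ∑ β, b i j α β * ξ i α * ξ j β) ≤
        μ⁻¹ * (∑ i, ∑ α, (ξ i α) ^ 2)) :
    ∃ μ' > (0:ℝ), ∀ ξ : Matrix (Fin d) (Fin d) ℝ,
      μ' * (∑ i, ∑ α, (ξ i α) ^ 2) ≤
        ∑ i, ∑ j, ∑ α, ∑ β,
          (b i j α β + μ / 2 * (if i = α then (1:ℝ) else 0) * (if j = β then (1:ℝ) else 0)
            - μ / 2 * (if i = β then (1:ℝ) else 0) * (if j = α then (1:ℝ) else 0)) *
            ξ i α * ξ j β := by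
  -- extra symmetry: b i β α j = b i j α β
  have hsym3 : ∀ i j α β, b i β α j = b i j α β := by
    intro i j α β
    rw [hsym2 i β α j, hsym1 α β i j, hsym2 β α j i, hsym1 j α β i, hsym2 α j i β]
  refine ⟨μ / 2, by positivity, fun ξ => ?_⟩
  set σ : Matrix (Fin d) (Fin d) ℝ := fun i α => (ξ i α + ξ α i) / 2 with hσ
  set τ : Matrix (Fin d) (Fin d) ℝ := fun i α => (ξ i α - ξ α i) / 2 with hτ
  have hσsymm : σ.IsSymm := by
    ext i α
    simp [Matrix.transpose_apply, hσ]
    show (ξ α i + ξ i α) / 2 = _; ring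
  -- notation for the b-quadratic form
  have hB := (hell σ hσsymm).1
  -- B(ξ,ξ) = B(σ,σ)
  have hswap13 : (∑ i, ∑ j, ∑ α, ∑ β, b i j α β * ξ α i * ξ j β)
      = ∑ i, ∑ j, ∑ α, ∑ β, b i j α β * ξ i α * ξ j β := by
    rw [sum4_13 (fun i j α β => b i j α β * ξ α i * ξ j β)]
    refine Finset.sum_congr rfl fun i _ => Finset.sum_congr rfl fun j _ =>
      Finset.sum_congr rfl fun α _ => Finset.sum_congr rfl fun β _ => ?_
    rw [hsym2 α j i β]
  have hswap24 : (∑ i, ∑ j, ∑ α, ∑ β, b i j α β * ξ i α * ξ β j)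
      = ∑ i, ∑ j, ∑ α, ∑ β, b i j α β * ξ i α * ξ j β := by
    rw [sum4_24 (fun i j α β => b i j α β * ξ i α * ξ β j)]
    refine Finset.sum_congr rfl fun i _ => Finset.sum_congr rfl fun j _ =>
      Finset.sum_congr rfl fun α _ => Finset.sum_congr rfl fun β _ => ?_
    rw [hsym3 i j α β]
  have hswapboth : (∑ i, ∑ j, ∑ α, ∑ β, b i j α β * ξ α i * ξ β j)
      = ∑ i, ∑ j, ∑ α, ∑ β, b i j α β * ξ i α * ξ j β := by
    rw [sum4_13 (fun i j α β => b i j α β * ξ α i * ξ β j)]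
    rw [sum4_24 (fun i j α β => b α j i β * ξ i α * ξ β j)]
    refine Finset.sum_congr rfl fun i _ => Finset.sum_congr rfl fun j _ =>
      Finset.sum_congr rfl fun α _ => Finset.sum_congr rfl fun β _ => ?_
    rw [hsym2 α β i j, hsym3 i j α β]
  have hBσ : (∑ i, ∑ j, ∑ α, ∑ β, b i j α β * σ i α * σ j β)
      = ∑ i, ∑ j, ∑ α, ∑ β, b i j α β * ξ i α * ξ j β := by
    have expand : ∀ i j α β : Fin d, b i j α β * σ i α * σ j β =
        (b i j α β * ξ i α * ξ j β + b i j α β * ξ α i * ξ j β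
          + b i j α β * ξ i α * ξ β j + b i j α β * ξ α i * ξ β j) / 4 := by
      intro i j α β; simp only [hσ]; ring
    simp only [expand, ← Finset.sum_div, Finset.sum_add_distrib]
    rw [hswap13, hswap24, hswapboth]
    ring
  -- split the RHS
  have h1 : (∑ i, ∑ j, ∑ α, ∑ β,
        (if i = α then (1:ℝ) else 0) * (if j = β then (1:ℝ) else 0) * ξ i α * ξ j β)
      = (∑ i, ξ i i) * (∑ i, ξ i i) := by
    rw [Finset.sum_mul_sum]
    refine Finset.sum_congr rfl fun i _ => Finset.sum_congr rfl fun j _ => ?_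
    simp [ite_mul, Finset.sum_ite_eq, mul_comm]
  have h2 : (∑ i, ∑ j, ∑ α, ∑ β,
        (if i = β then (1:ℝ) else 0) * (if j = α then (1:ℝ) else 0) * ξ i α * ξ j β)
      = ∑ i, ∑ j, ξ i j * ξ j i := by
    refine Finset.sum_congr rfl fun i _ => Finset.sum_congr rfl fun j _ => ?_
    simp [ite_mul, Finset.sum_ite_eq, mul_comm]
  have hsplit : (∑ i, ∑ j, ∑ α, ∑ β,
        (b i j α β + μ / 2 * (if i = α then (1:ℝ) else 0) * (if j = β then (1:ℝ) else 0)
          - μ / 2 * (if i = β then (1:ℝ) else 0) * (if j = α then (1:ℝ) else 0)) *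
          ξ i α * ξ j β)
      = (∑ i, ∑ j, ∑ α, ∑ β, b i j α β * ξ i α * ξ j β)
        + μ / 2 * ((∑ i, ξ i i) * (∑ i, ξ i i))
        - μ / 2 * (∑ i, ∑ j, ξ i j * ξ j i) := by
    have e : ∀ i j α β : Fin d,
        (b i j α β + μ / 2 * (if i = α then (1:ℝ) else 0) * (if j = β then (1:ℝ) else 0)
          - μ / 2 * (if i = β then (1:ℝ) else 0) * (if j = α then (1:ℝ) else 0)) *
          ξ i α * ξ j β
        = b i j α β * ξ i α * ξ j β
          + μ / 2 * ((if i = α then (1:ℝ) else 0) * (if j = β then (1:ℝ) else 0) * ξ i α * ξ j β)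
          - μ / 2 * ((if i = β then (1:ℝ) else 0) * (if j = α then (1:ℝ) else 0) * ξ i α * ξ j β) := by
      intro i j α β; ring
    simp only [e, Finset.sum_add_distrib, Finset.sum_sub_distrib, ← Finset.mul_sum]
    rw [h1, h2]
  -- quadratic identities
  have hQR : (∑ i, ∑ α, (σ i α) ^ 2) + (∑ i, ∑ α, (τ i α) ^ 2) = ∑ i, ∑ α, (ξ i α) ^ 2 := by
    have e : ∀ i α : Fin d, (σ i α) ^ 2 + (τ i α) ^ 2 = ((ξ i α) ^ 2 + (ξ α i) ^ 2) / 2 := by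
      intro i α; simp only [hσ, hτ]; ring
    have hswap : (∑ i, ∑ α, (ξ α i) ^ 2) = ∑ i, ∑ α, (ξ i α) ^ 2 := Finset.sum_comm
    calc (∑ i, ∑ α, (σ i α) ^ 2) + (∑ i, ∑ α, (τ i α) ^ 2)
        = ∑ i, ∑ α, ((σ i α) ^ 2 + (τ i α) ^ 2) := by
          simp only [Finset.sum_add_distrib]
      _ = ((∑ i, ∑ α, (ξ i α) ^ 2) + (∑ i, ∑ α, (ξ α i) ^ 2)) / 2 := by
          simp only [e, ← Finset.sum_div, Finset.sum_add_distrib]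
      _ = ∑ i, ∑ α, (ξ i α) ^ 2 := by rw [hswap]; ring
  have hP : (∑ i, ∑ j, ξ i j * ξ j i)
      = (∑ i, ∑ α, (σ i α) ^ 2) - (∑ i, ∑ α, (τ i α) ^ 2) := by
    simp only [← Finset.sum_sub_distrib]
    refine Finset.sum_congr rfl fun i _ => Finset.sum_congr rfl fun j _ => ?_
    simp only [hσ, hτ]; ring
  rw [hsplit]
  nlinarith [hB, hBσ, hQR, hP, sq_nonneg (∑ i, ξ i i),
    mul_pos hμ hμ, sq_nonneg μ, hμ.le]
end

section
/- Let $\Omega \subset \mathbb{R}^d$ be a bounded domain and let $p : \Omega \to \mathbb{R}$ be continuous. Suppose there exist $r_0, r_1 > 0$, $M, N \in \mathbb{N}$, $c_0 > 0$, a point $x_0$ with $\mathrm{dist}(x_0,\partial\Omega) > r_0$ and $p(x_0) = 0$, and a constant $A > 0$ such that: (i) for every ball $B$ with $8B \subset \Omega$, $\mathrm{osc}_B[p] \le A\,\varepsilon / \mathrm{diam}(B)$; (ii) any two points of $\{x : \mathrm{dist}(x,\partial\Omega) > r_0\}$ can be joined by a chain of at most $M$ balls $B_i$ with $8B_i \subset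 \Omega$ and $\mathrm{diam}(B_i) > r_1$; (iii) every $x \in \Omega$ with $\delta(x) := \mathrm{dist}(x,\partial\Omega) < r_0$ can be joined to a point $\tilde x$ with $\delta(\tilde x) > r_0$ by a chain of balls $\{B_{ki}\}$, $k \ge 1$, $1 \le i \le N$, such that $\mathrm{diam}(B_{ki}) > c_0 2^k \delta(x)$ and $8B_{ki} \subset \Omega$. Then there is a constant $C$ depending only on $M, N, r_0, r_1, c_0, A$ such that $|p(x)| \le C\,\varepsilon / \delta(x)$ for every $x \in \Omega$. -/
open Metric

open Set Set.Notation

lemma aux_mem_of_dist_lt {E : Type*} [NormedAddCommGroup E] [NormedSpace ℝ E]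
    {Ω : Set E} (hΩ : IsOpen Ω) {x y : E} (hx : x ∈ Ω)
    (h : dist x y < Metric.infDist x (frontier Ω)) : y ∈ Ω := by
  by_contra hy
  have hseg : IsPreconnected (segment ℝ x y) := (convex_segment x y).isPreconnected
  have hdisj : Disjoint (frontier Ω) (segment ℝ x y) := by
    rw [Set.disjoint_left]
    intro w hw hwseg
    have h1 : Metric.infDist x (frontier Ω) ≤ dist x w := Metric.infDist_le_dist_of_mem hw
    have h2 : dist x w + dist w y = dist x y := dist_add_dist_of_mem_segment hwseg
    have h3 : (0:ℝ) ≤ dist w y := dist_nonneg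
    linarith
  have hclopen : IsClopen ((segment ℝ x y) ↓∩ Ω) := isClopen_preimage_val hΩ hdisj
  haveI : PreconnectedSpace (segment ℝ x y) := Subtype.preconnectedSpace hseg
  rcases isClopen_iff.mp hclopen with h0 | h1
  · have hxm : (⟨x, left_mem_segment ℝ x y⟩ : segment ℝ x y) ∈ ((segment ℝ x y) ↓∩ Ω) := hx
    rw [h0] at hxm
    exact hxm
  · have hym : (⟨y, right_mem_segment ℝ x y⟩ : segment ℝ x y) ∈ ((segment ℝ x y) ↓∩ Ω) := by
      rw [h1]; trivial
    exact hy hym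

lemma aux_le_infDist {E : Type*} [MetricSpace E] {Ω : Set E} (hΩ : IsOpen Ω)
    (hne : (frontier Ω).Nonempty) {z : E} {r : ℝ} (h : Metric.ball z r ⊆ Ω) :
    r ≤ Metric.infDist z (frontier Ω) := by
  by_contra hlt
  push_neg at hlt
  obtain ⟨w, hwf, hwd⟩ := (Metric.infDist_lt_iff hne).mp hlt
  have hwΩ : w ∈ Ω := h (Metric.mem_ball.mpr (by rwa [dist_comm]))
  have : w ∉ interior Ω := hwf.2
  rw [hΩ.interior_eq] at this
  exact this hwΩ

lemma chain_telescope {E : Type*} (p : E → ℝ) (y : ℕ → E) (b : ℕ → ℝ) (n : ℕ)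
    (h : ∀ i < n, |p (y i) - p (y (i+1))| ≤ b i) :
    |p (y 0) - p (y n)| ≤ ∑ i ∈ Finset.range n, b i := by
  have e : p (y n) - p (y 0) = ∑ i ∈ Finset.range n, (p (y (i+1)) - p (y i)) :=
    (Finset.sum_range_sub (fun i => p (y i)) n).symm
  rw [abs_sub_comm, e]
  refine (Finset.abs_sum_le_sum_abs _ _).trans (Finset.sum_le_sum ?_)
  intro i hi
  rw [abs_sub_comm]
  exact h i (Finset.mem_range.mp hi)

lemma chain_growth {K : ℝ} (hK : 1 ≤ K) :
    ∀ (n : ℕ) (f : ℕ → ℝ), (∀ i < n, f i ≤ K * f (i+1)) → f 0 ≤ K ^ n * f n := by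
  intro n
  induction n with
  | zero => intro f _; simp
  | succ m ih =>
    intro f h
    have h1 : f 0 ≤ K ^ m * f m := ih f (fun i hi => h i (by omega))
    have h2 : f m ≤ K * f (m+1) := h m (by omega)
    have hKn : (0:ℝ) ≤ K ^ m := by positivity
    calc f 0 ≤ K ^ m * f m := h1
      _ ≤ K ^ m * (K * f (m+1)) := by nlinarith
      _ = K ^ (m+1) * f (m+1) := by ring

lemma geom_Icc_le (K : ℕ) : ∑ k ∈ Finset.Icc 1 K, ((2:ℝ))⁻¹ ^ k ≤ 1 - (2:ℝ)⁻¹ ^ K := by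
  induction K with
  | zero => simp
  | succ m ih =>
    rw [Finset.sum_Icc_succ_top (by omega : 1 ≤ m + 1)]
    have e : ((2:ℝ))⁻¹ ^ (m+1) = (2:ℝ)⁻¹ ^ m * 2⁻¹ := pow_succ _ _
    linarith

lemma geom_finset_le (T : Finset ℕ) (hT : ∀ k ∈ T, 1 ≤ k) :
    ∑ k ∈ T, ((2:ℝ))⁻¹ ^ k ≤ 1 := by
  have hsub : T ⊆ Finset.Icc 1 (T.sup id) := fun k hk =>
    Finset.mem_Icc.mpr ⟨hT k hk, Finset.le_sup (f := id) hk⟩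
  have h1 : ∑ k ∈ T, ((2:ℝ))⁻¹ ^ k ≤ ∑ k ∈ Finset.Icc 1 (T.sup id), ((2:ℝ))⁻¹ ^ k :=
    Finset.sum_le_sum_of_subset_of_nonneg hsub (fun k _ _ => by positivity)
  have h2 := geom_Icc_le (T.sup id)
  have h3 : (0:ℝ) ≤ (2:ℝ)⁻¹ ^ (T.sup id) := by positivity
  linarith


set_option maxHeartbeats 1600000 in
/-- abstract Harnack-chain argument bounding a continuous function
`p` vanishing at a deep interior point, given oscillation bounds on balls and the
existence of suitable chains of balls. -/
theorem stmt_13 (d : ℕ) (r0 r1 c0 A : ℝ) (M N : ℕ)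
    (hr0 : 0 < r0) (hr1 : 0 < r1) (hc0 : 0 < c0) (hA : 0 < A) :
    ∃ C > (0:ℝ), ∀ (Ω : Set (EuclideanSpace ℝ (Fin d)))
      (p : EuclideanSpace ℝ (Fin d) → ℝ) (ε : ℝ) (x0 : EuclideanSpace ℝ (Fin d)),
      IsOpen Ω → IsConnected Ω → Bornology.IsBounded Ω →
      ContinuousOn p Ω → 0 < ε →
      x0 ∈ Ω → r0 < Metric.infDist x0 (frontier Ω) → p x0 = 0 →
      -- (i): oscillation bound on balls `B` with `8B ⊆ Ω`
      (∀ (y : EuclideanSpace ℝ (Fin d)) (ρ : ℝ), 0 < ρ →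
        Metric.ball y (8 * ρ) ⊆ Ω →
        ∀ a ∈ Metric.ball y ρ, ∀ b ∈ Metric.ball y ρ,
          |p a - p b| ≤ A * ε / (2 * ρ)) →
      -- (ii): chains of at most `M` balls in the deep interior
      (∀ x1 ∈ Ω, ∀ x2 ∈ Ω,
        r0 < Metric.infDist x1 (frontier Ω) → r0 < Metric.infDist x2 (frontier Ω) →
        ∃ n : ℕ, n ≤ M ∧ ∃ (y cc : ℕ → EuclideanSpace ℝ (Fin d)) (ρ : ℕ → ℝ),
          y 0 = x1 ∧ y n = x2 ∧ ∀ i < n,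
            y i ∈ Metric.ball (cc i) (ρ i) ∧ y (i+1) ∈ Metric.ball (cc i) (ρ i) ∧
            Metric.ball (cc i) (8 * ρ i) ⊆ Ω ∧ r1 < 2 * ρ i) →
      -- (iii): chains from near-boundary points to the deep interior, with at most
      -- `N` balls at each dyadic scale `2^k δ(x)`
      (∀ x ∈ Ω, Metric.infDist x (frontier Ω) < r0 →
        ∃ xt ∈ Ω, r0 < Metric.infDist xt (frontier Ω) ∧
        ∃ (n : ℕ) (y cc : ℕ → EuclideanSpace ℝ (Fin d)) (ρ : ℕ → ℝ) (κ : ℕ → ℕ),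
          y 0 = x ∧ y n = xt ∧
          (∀ i < n,
            y i ∈ Metric.ball (cc i) (ρ i) ∧ y (i+1) ∈ Metric.ball (cc i) (ρ i) ∧
            Metric.ball (cc i) (8 * ρ i) ⊆ Ω ∧ 1 ≤ κ i ∧
            c0 * 2 ^ (κ i) * Metric.infDist x (frontier Ω) < 2 * ρ i) ∧
          (∀ k : ℕ, ((Finset.range n).filter (fun i => κ i = k)).card ≤ N)) →
      ∀ x ∈ Ω, |p x| ≤ C * ε / Metric.infDist x (frontier Ω) := by
  obtain ⟨D0, hD0def⟩ : ∃ D0 : ℝ, D0 = 2 * r0 * (9/7:ℝ)^M := ⟨_, rfl⟩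
  have hD0 : (0:ℝ) < D0 := by rw [hD0def]; positivity
  obtain ⟨C1, hC1def⟩ : ∃ C1 : ℝ, C1 = N*A/c0 + M*A*D0/r1 := ⟨_, rfl⟩
  have hC1 : (0:ℝ) ≤ C1 := by rw [hC1def]; positivity
  refine ⟨2*C1 + 4*A, by positivity, ?_⟩
  intro Ω p ε x0 hopen hconn hbdd hcont hε hx0 hx0deep hpx0 hOsc hChain2 hChain3
  -- frontier nonempty
  have hfr : (frontier Ω).Nonempty := by
    rcases Set.eq_empty_or_nonempty (frontier Ω) with h | h
    · rw [h, Metric.infDist_empty] at hx0deep; linarith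
    · exact h
  have L2 : ∀ (z : EuclideanSpace ℝ (Fin d)) (r : ℝ), Metric.ball z r ⊆ Ω →
      r ≤ Metric.infDist z (frontier Ω) := fun z r h => aux_le_infDist hopen hfr h
  have hδpos : ∀ x ∈ Ω, 0 < Metric.infDist x (frontier Ω) := by
    intro x hx
    obtain ⟨r, hr, hball⟩ := Metric.isOpen_iff.mp hopen x hx
    exact lt_of_lt_of_le hr (L2 x r hball)
  have L1 : ∀ x ∈ Ω, ∀ y : EuclideanSpace ℝ (Fin d),
      dist x y < Metric.infDist x (frontier Ω) → y ∈ Ω :=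
    fun x hx y h => aux_mem_of_dist_lt hopen hx h
  -- deep pair estimate
  have deep_pair : ∀ x1 ∈ Ω, ∀ x2 ∈ Ω,
      r0 < Metric.infDist x1 (frontier Ω) → r0 < Metric.infDist x2 (frontier Ω) →
      |p x1 - p x2| ≤ M * (A*ε/r1) ∧
      Metric.infDist x1 (frontier Ω) ≤ (9/7:ℝ)^M * Metric.infDist x2 (frontier Ω) := by
    intro x1 hx1 x2 hx2 h1 h2
    obtain ⟨n, hnM, y, cc, ρ, hy0, hyn, hch⟩ := hChain2 x1 hx1 x2 hx2 h1 h2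
    have hρpos : ∀ i < n, 0 < ρ i := fun i hi =>
      lt_of_le_of_lt dist_nonneg (Metric.mem_ball.mp (hch i hi).1)
    have osc : ∀ i < n, |p (y i) - p (y (i+1))| ≤ A*ε/r1 := by
      intro i hi
      obtain ⟨ha, hb, hsub, hdiam⟩ := hch i hi
      have h8 := hOsc (cc i) (ρ i) (hρpos i hi) hsub (y i) ha (y (i+1)) hb
      refine h8.trans ?_
      apply div_le_div_of_nonneg_left (by positivity) hr1 hdiam.le
    constructor
    · have := chain_telescope p y (fun _ => A*ε/r1) n osc
      rw [hy0, hyn] at this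
      refine this.trans ?_
      rw [Finset.sum_const, Finset.card_range, nsmul_eq_mul]
      have hb : (0:ℝ) ≤ A*ε/r1 := by positivity
      exact mul_le_mul_of_nonneg_right (Nat.cast_le.mpr hnM) hb
    · have step : ∀ i < n, Metric.infDist (y i) (frontier Ω) ≤
          (9/7:ℝ) * Metric.infDist (y (i+1)) (frontier Ω) := by
        intro i hi'
        obtain ⟨ha, hb, hsub, _⟩ := hch i hi'
        have h7 : 7 * ρ i ≤ Metric.infDist (y (i+1)) (frontier Ω) := by
          apply L2
          intro w hw
          apply hsub
          have hw1 : dist w (y (i+1)) < 7 * ρ i := Metric.mem_ball.mp hw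
          have hw2 : dist (y (i+1)) (cc i) < ρ i := Metric.mem_ball.mp hb
          have hwcc : dist w (cc i) < 8 * ρ i := by
            calc dist w (cc i) ≤ dist w (y (i+1)) + dist (y (i+1)) (cc i) := dist_triangle _ _ _
              _ < 7 * ρ i + ρ i := add_lt_add hw1 hw2
              _ = 8 * ρ i := by ring
          exact Metric.mem_ball.mpr hwcc
        have hd : dist (y i) (y (i+1)) ≤ 2 * ρ i := by
          have ha' : dist (y i) (cc i) < ρ i := Metric.mem_ball.mp ha
          have hb' : dist (cc i) (y (i+1)) < ρ i := by
            rw [dist_comm]; exact Metric.mem_ball.mp hb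
          calc dist (y i) (y (i+1)) ≤ dist (y i) (cc i) + dist (cc i) (y (i+1)) :=
                dist_triangle _ _ _
            _ ≤ 2 * ρ i := by linarith
        have hlip : Metric.infDist (y i) (frontier Ω) ≤
            Metric.infDist (y (i+1)) (frontier Ω) + dist (y i) (y (i+1)) :=
          Metric.infDist_le_infDist_add_dist
        linarith
      have hg := chain_growth (by norm_num : (1:ℝ) ≤ 9/7) n
        (fun i => Metric.infDist (y i) (frontier Ω)) step
      rw [hy0, hyn] at hg
      refine hg.trans ?_
      have hpow : (9/7:ℝ)^n ≤ (9/7:ℝ)^M := pow_le_pow_right₀ (by norm_num) hnM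
      exact mul_le_mul_of_nonneg_right hpow Metric.infDist_nonneg
  -- deep bound
  have deep_bound : ∀ x ∈ Ω, r0 < Metric.infDist x (frontier Ω) →
      |p x| ≤ M * (A*ε/r1) ∧ Metric.infDist x (frontier Ω) ≤ D0 := by
    intro x hx hxd
    have hfirst : |p x| ≤ M * (A*ε/r1) := by
      have h := (deep_pair x hx x0 hx0 hxd hx0deep).1
      rwa [hpx0, sub_zero] at h
    refine ⟨hfirst, ?_⟩
    -- construct a point x2 with infDist = t0 ∈ (r0, 2r0]
    obtain ⟨z0, hz0f, hz0d⟩ := isClosed_frontier.exists_infDist_eq_dist hfr x0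
    set δ0 : ℝ := Metric.infDist x0 (frontier Ω) with hδ0def
    set t0 : ℝ := min (2*r0) ((r0 + δ0)/2) with ht0def
    have ht0a : r0 < t0 := lt_min (by linarith) (by simp only [hδ0def]; linarith)
    have ht0b : t0 ≤ 2*r0 := min_le_left _ _
    have hδ0pos : 0 < δ0 := by simp only [hδ0def]; linarith
    have ht0c : t0 ≤ δ0 := le_trans (min_le_right _ _) (by simp only [hδ0def]; linarith)
    have ht0pos : 0 < t0 := lt_trans hr0 ht0a
    set t : ℝ := 1 - t0 / (2 * δ0) with htdef
    have htlt : t < 1 := by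
      have : 0 < t0 / (2 * δ0) := by positivity
      simp only [htdef]; linarith
    have htge : 0 ≤ t := by
      have : t0 / (2 * δ0) ≤ 1 := by
        rw [div_le_one (by positivity)]; linarith
      simp only [htdef]; linarith
    set b : EuclideanSpace ℝ (Fin d) := x0 + t • (z0 - x0) with hbdef
    have e1 : dist x0 b = t * dist x0 z0 := by
      rw [hbdef, dist_eq_norm, dist_eq_norm]
      have e : x0 - (x0 + t • (z0 - x0)) = t • (x0 - z0) := by module
      rw [e, norm_smul, Real.norm_eq_abs, abs_of_nonneg htge]
    have e2 : dist b z0 = (1 - t) * dist x0 z0 := by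
      rw [hbdef, dist_eq_norm, dist_eq_norm]
      have e : (x0 + t • (z0 - x0)) - z0 = (1 - t) • (x0 - z0) := by module
      rw [e, norm_smul, Real.norm_eq_abs, abs_of_nonneg (by linarith : (0:ℝ) ≤ 1 - t)]
    have hbΩ : b ∈ Ω := by
      apply L1 x0 hx0
      rw [e1, ← hz0d, ← hδ0def]
      nlinarith
    have hδb : Metric.infDist b (frontier Ω) ≤ t0/2 := by
      have h1 : Metric.infDist b (frontier Ω) ≤ dist b z0 := Metric.infDist_le_dist_of_mem hz0f
      rw [e2, ← hz0d] at h1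
      have e3 : (1 - t) * δ0 = t0/2 := by
        simp only [htdef]
        field_simp
        ring
      exact h1.trans e3.le
    have hIVT := (hconn.isPreconnected).intermediate_value hbΩ hx0
      ((Metric.continuous_infDist_pt (frontier Ω)).continuousOn)
    have ht0mem : t0 ∈ Set.Icc (Metric.infDist b (frontier Ω)) (Metric.infDist x0 (frontier Ω)) := by
      constructor
      · linarith
      · exact ht0c
    obtain ⟨x2, hx2Ω, hx2δ0⟩ := hIVT ht0mem
    have hx2δ : Metric.infDist x2 (frontier Ω) = t0 := hx2δ0
    have hx2deep : r0 < Metric.infDist x2 (frontier Ω) := by rw [hx2δ]; exact ht0a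
    have hgrow := (deep_pair x hx x2 hx2Ω hxd hx2deep).2
    rw [hx2δ] at hgrow
    have hpow : (0:ℝ) ≤ (9/7:ℝ)^M := by positivity
    calc Metric.infDist x (frontier Ω) ≤ (9/7:ℝ)^M * t0 := hgrow
      _ ≤ (9/7:ℝ)^M * (2*r0) := mul_le_mul_of_nonneg_left ht0b hpow
      _ = D0 := by rw [hD0def]; ring
  -- shallow bound
  have shallow_bound : ∀ x ∈ Ω, Metric.infDist x (frontier Ω) < r0 →
      |p x| ≤ C1 * ε / Metric.infDist x (frontier Ω) := by
    intro x hx hxs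
    have hδx : 0 < Metric.infDist x (frontier Ω) := hδpos x hx
    set δx : ℝ := Metric.infDist x (frontier Ω) with hδxdef
    obtain ⟨xt, hxtΩ, hxtd, n, y, cc, ρ, κ, hy0, hyn, hch, hcard⟩ := hChain3 x hx hxs
    have osc : ∀ i < n, |p (y i) - p (y (i+1))| ≤
        (fun k => (A*ε/(c0 * δx)) * ((2:ℝ))⁻¹ ^ k) (κ i) := by
      intro i hi
      obtain ⟨ha, hb, hsub, hκ1, hκd⟩ := hch i hi
      have hρpos : 0 < ρ i := lt_of_le_of_lt dist_nonneg (Metric.mem_ball.mp ha)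
      have h8 := hOsc (cc i) (ρ i) hρpos hsub (y i) ha (y (i+1)) hb
      refine h8.trans ?_
      have hpos : (0:ℝ) < c0 * 2^(κ i) * δx := by positivity
      have hle : A*ε/(2*ρ i) ≤ A*ε/(c0 * 2^(κ i) * δx) := by
        apply div_le_div_of_nonneg_left (by positivity) hpos hκd.le
      refine hle.trans (le_of_eq ?_)
      simp only
      field_simp
      ring
      rw [← mul_pow]; norm_num
    have tele := chain_telescope p y _ n osc
    rw [hy0, hyn] at tele
    have hsum : ∑ i ∈ Finset.range n, (A*ε/(c0 * δx)) * ((2:ℝ))⁻¹ ^ (κ i) ≤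
        N * (A*ε/(c0 * δx)) := by
      rw [Finset.sum_comp (fun k => (A*ε/(c0 * δx)) * ((2:ℝ))⁻¹ ^ k) κ]
      have step1 : ∑ k ∈ (Finset.range n).image κ,
          ((Finset.range n).filter (fun i => κ i = k)).card •
            ((A*ε/(c0 * δx)) * ((2:ℝ))⁻¹ ^ k) ≤
          ∑ k ∈ (Finset.range n).image κ, (N:ℝ) * ((A*ε/(c0 * δx)) * ((2:ℝ))⁻¹ ^ k) := by
        apply Finset.sum_le_sum
        intro k _
        rw [nsmul_eq_mul]
        exact mul_le_mul_of_nonneg_right (Nat.cast_le.mpr (hcard k)) (by positivity)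
      refine step1.trans ?_
      have step2 : ∑ k ∈ (Finset.range n).image κ,
          (N:ℝ) * ((A*ε/(c0 * δx)) * ((2:ℝ))⁻¹ ^ k) =
          (N:ℝ) * (A*ε/(c0 * δx)) * ∑ k ∈ (Finset.range n).image κ, ((2:ℝ))⁻¹ ^ k := by
        rw [Finset.mul_sum]
        apply Finset.sum_congr rfl
        intro k _
        ring
      rw [step2]
      have hge1 : ∀ k ∈ (Finset.range n).image κ, 1 ≤ k := by
        intro k hk
        obtain ⟨i, hi, rfl⟩ := Finset.mem_image.mp hk
        exact (hch i (Finset.mem_range.mp hi)).2.2.2.1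
      have hgeom := geom_finset_le ((Finset.range n).image κ) hge1
      have hcn : (0:ℝ) ≤ (N:ℝ) * (A*ε/(c0 * δx)) := by positivity
      nlinarith
    have hxt_bound := (deep_bound xt hxtΩ hxtd).1
    have habs : |p x| ≤ |p x - p xt| + |p xt| := by
      simpa using abs_add_le (p x - p xt) (p xt)
    have key1 : |p x - p xt| ≤ N * (A*ε/(c0 * δx)) := tele.trans hsum
    have hpow1 : (1:ℝ) ≤ (9/7:ℝ)^M := one_le_pow₀ (by norm_num)
    have hδD0 : δx ≤ D0 := by
      have h2 : 2*r0 ≤ 2*r0*(9/7:ℝ)^M := le_mul_of_one_le_right (by positivity) hpow1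
      rw [hD0def]
      linarith
    have e2' : (N:ℝ) * (A*ε/(c0*δx)) = (N*A/c0) * ε / δx := by
      field_simp
    have key2 : (M:ℝ) * (A*ε/r1) ≤ (M*A*D0/r1) * ε / δx := by
      rw [le_div_iff₀ hδx]
      calc (M:ℝ)*(A*ε/r1)*δx ≤ (M:ℝ)*(A*ε/r1)*D0 :=
            mul_le_mul_of_nonneg_left hδD0 (by positivity)
        _ = (M:ℝ)*A*D0/r1*ε := by ring
    have efin : C1 * ε / δx = (N*A/c0) * ε / δx + (M*A*D0/r1) * ε / δx := by
      rw [hC1def]; ring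
    linarith
  -- conclusion
  intro x hx
  have hδx : 0 < Metric.infDist x (frontier Ω) := hδpos x hx
  rcases lt_trichotomy (Metric.infDist x (frontier Ω)) r0 with hlt | heq | hgt
  · refine (shallow_bound x hx hlt).trans ?_
    gcongr
    linarith
  · obtain ⟨z, hzf, hzd⟩ := isClosed_frontier.exists_infDist_eq_dist hfr x
    have hdxz : dist x z = r0 := by rw [← hzd, heq]
    set x' : EuclideanSpace ℝ (Fin d) := x + (16:ℝ)⁻¹ • (z - x) with hx'def
    have e1 : dist x x' = 16⁻¹ * dist x z := by
      rw [hx'def, dist_eq_norm, dist_eq_norm]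
      have e : x - (x + (16:ℝ)⁻¹ • (z - x)) = (16:ℝ)⁻¹ • (x - z) := by module
      rw [e, norm_smul, Real.norm_eq_abs, abs_of_nonneg (by norm_num : (0:ℝ) ≤ (16:ℝ)⁻¹)]
    have e2 : dist x' z = (15/16) * dist x z := by
      rw [hx'def, dist_eq_norm, dist_eq_norm]
      have e : (x + (16:ℝ)⁻¹ • (z - x)) - z = ((15:ℝ)/16) • (x - z) := by module
      rw [e, norm_smul, Real.norm_eq_abs, abs_of_nonneg (by norm_num : (0:ℝ) ≤ (15:ℝ)/16)]
    have hx'Ω : x' ∈ Ω := by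
      apply L1 x hx
      rw [heq, e1, hdxz]
      linarith
    have hub : Metric.infDist x' (frontier Ω) ≤ 15/16 * r0 :=
      (Metric.infDist_le_dist_of_mem hzf).trans_eq (by rw [e2, hdxz])
    have hlb : 15/16 * r0 ≤ Metric.infDist x' (frontier Ω) := by
      have hl : Metric.infDist x (frontier Ω) ≤
          Metric.infDist x' (frontier Ω) + dist x x' := Metric.infDist_le_infDist_add_dist
      rw [heq, e1, hdxz] at hl
      linarith
    have hx'shallow : Metric.infDist x' (frontier Ω) < r0 := lt_of_le_of_lt hub (by linarith)
    have hpx' := shallow_bound x' hx'Ω hx'shallow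
    have hpx'2 : |p x'| ≤ 2 * C1 * ε / r0 := by
      have h0 : 0 < Metric.infDist x' (frontier Ω) := hδpos x' hx'Ω
      have s1 : C1*ε/Metric.infDist x' (frontier Ω) ≤ C1*ε/(15/16*r0) :=
        div_le_div_of_nonneg_left (by positivity) (by positivity) hlb
      have s2 : C1*ε/(15/16*r0) ≤ 2*C1*ε/r0 := by
        rw [div_le_div_iff₀ (by positivity) hr0]
        linarith [mul_nonneg (mul_nonneg hC1 hε.le) hr0.le]
      exact hpx'.trans (s1.trans s2)
    have hball : Metric.ball x (8 * (r0/8)) ⊆ Ω := by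
      intro w hw
      apply L1 x hx w
      have hw' := Metric.mem_ball.mp hw
      rw [heq, dist_comm]
      linarith
    have hosc := hOsc x (r0/8) (by positivity) hball x (Metric.mem_ball_self (by positivity))
      x' (Metric.mem_ball.mpr (by rw [dist_comm, e1, hdxz]; linarith))
    have hosc2 : |p x - p x'| ≤ 4*A*ε/r0 := by
      refine hosc.trans (le_of_eq ?_)
      field_simp
      ring
    have habs : |p x| ≤ |p x - p x'| + |p x'| := by
      simpa using abs_add_le (p x - p x') (p x')
    rw [heq]
    have efin : (2*C1+4*A)*ε/r0 = 2*C1*ε/r0 + 4*A*ε/r0 := by ring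
    linarith
  · obtain ⟨hp1, hp2⟩ := deep_bound x hx hgt
    have key2 : (M:ℝ)*(A*ε/r1) ≤ (M*A*D0/r1)*ε/ Metric.infDist x (frontier Ω) := by
      rw [le_div_iff₀ hδx]
      calc (M:ℝ)*(A*ε/r1)* Metric.infDist x (frontier Ω) ≤ (M:ℝ)*(A*ε/r1)*D0 :=
            mul_le_mul_of_nonneg_left hp2 (by positivity)
        _ = (M:ℝ)*A*D0/r1*ε := by ring
    have hle : (M:ℝ)*A*D0/r1 ≤ 2*C1+4*A := by
      have h1 : (0:ℝ) ≤ N*A/c0 := by positivity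
      rw [hC1def]
      have h2 : (0:ℝ) ≤ (M:ℝ)*A*D0/r1 := by positivity
      linarith [hA.le]
    have key3 : (M*A*D0/r1)*ε/ Metric.infDist x (frontier Ω) ≤
        (2*C1+4*A)*ε/ Metric.infDist x (frontier Ω) := by
      gcongr
    linarith
end

section
/- Let $b : \mathbb{R}^d \to \mathbb{R}$ be 1-periodic, bounded, and measurable with $\int_{[0,1]^d} b = 0$. Let $D \subset \mathbb{R}^d$ be a bounded measurable set, $\varepsilon > 0$, and let $v \in C^{0,\eta}(D) \cap L^\infty(D)$ for some $\eta \in (0,1]$. Set $S = \{z \in \mathbb{Z}^d : \varepsilon(z + [0,1]^d) \subset D\}$ and $E_\varepsilon = \{x \in D : \mathrm{dist}(x, \partial D) \le \sqrt{d}\,\varepsilon\}$, and assume $D \setminus \bigcup_{z \in S}\varepsilon(z + [0,1]^d) \subset E_\varepsilon$ and $|E_\varepsilon| \le C_1 \varepsilon\, |D|/\mathrm{diam}(D)$. Then $\Big|\frac{1}{|D|}\int_D b(x/\varepsilon)\,v(x)\,dx\Big| \le C\Big(\varepsilon^\eta\,[v]_{C^{0,\eta}(D)} + \frac{\varepsilon}{\mathrm{diam}(D)}\,\|v\|_{L^\infty(D)}\Big)$,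 where $C$ depends only on $d$, $C_1$, and $\|b\|_{L^\infty}$. -/
open Metric MeasureTheory

namespace Stmt17Aux

variable {d : ℕ}

/-- closed box in `EuclideanSpace`. -/
abbrev box (d : ℕ) (a c : Fin d → ℝ) : Set (EuclideanSpace ℝ (Fin d)) :=
  {x | ∀ n, a n ≤ (WithLp.equiv 2 (Fin d → ℝ)) x n ∧ (WithLp.equiv 2 (Fin d → ℝ)) x n ≤ c n}

lemma measurable_coord (n : Fin d) :
    Measurable fun x : EuclideanSpace ℝ (Fin d) => (WithLp.equiv 2 (Fin d → ℝ)) x n := by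
  have h := (measurable_pi_apply n).comp ((MeasurableEquiv.toLp 2 (Fin d → ℝ)).symm).measurable
  exact h

lemma measurableSet_box (a c : Fin d → ℝ) : MeasurableSet (box d a c) := by
  have : box d a c = ⋂ n, (fun x : EuclideanSpace ℝ (Fin d) =>
      (WithLp.equiv 2 (Fin d → ℝ)) x n) ⁻¹' Set.Icc (a n) (c n) := by
    ext x
    simp [box, Set.mem_iInter, Set.mem_Icc]
  rw [this]
  exact MeasurableSet.iInter fun n => (measurable_coord n) measurableSet_Icc

lemma hyperplane_null (n : Fin d) (c : ℝ) :
    volume {x : EuclideanSpace ℝ (Fin d) | (WithLp.equiv 2 (Fin d → ℝ)) x n = c} = 0 := by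
  have hset : {x : EuclideanSpace ℝ (Fin d) | (WithLp.equiv 2 (Fin d → ℝ)) x n = c} =
      ((MeasurableEquiv.toLp 2 (Fin d → ℝ)).symm) ⁻¹' {y : Fin d → ℝ | y n = c} := by
    ext x
    simp [MeasurableEquiv.coe_toLp_symm]
  have htarget : (volume : Measure (Fin d → ℝ)) {y : Fin d → ℝ | y n = c} = 0 := by
    rw [volume_pi]
    exact Measure.pi_hyperplane (fun _ => (volume : Measure ℝ)) n c
  rw [hset, (EuclideanSpace.volume_preserving_symm_measurableEquiv_toLp (Fin d)).measure_preimage]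
  · exact htarget
  · exact ((measurable_pi_apply (X := fun _ : Fin d => ℝ) n)
      (measurableSet_singleton c)).nullMeasurableSet

lemma coord_le_norm (x : EuclideanSpace ℝ (Fin d)) (n : Fin d) :
    |(WithLp.equiv 2 (Fin d → ℝ)) x n| ≤ ‖x‖ := by
  rw [EuclideanSpace.norm_eq]
  have h1 : |(WithLp.equiv 2 (Fin d → ℝ)) x n| = Real.sqrt (‖x n‖ ^ 2) := by
    rw [Real.sqrt_sq_eq_abs]
    simp [Real.norm_eq_abs]
  rw [h1]
  apply Real.sqrt_le_sqrt
  exact Finset.single_le_sum (f := fun i => ‖x i‖ ^ 2) (fun i _ => by positivity)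
    (Finset.mem_univ n)

end Stmt17Aux

namespace Stmt17Aux

lemma corner_mem {ε : ℝ} (hε : 0 < ε) (z : Fin d → ℤ) :
    (WithLp.equiv 2 (Fin d → ℝ)).symm (fun n => ε * (z n : ℝ)) ∈
      box d (fun n => ε * (z n : ℝ)) (fun n => ε * ((z n : ℝ) + 1)) := by
  intro n
  simp only [Equiv.apply_symm_apply]
  refine ⟨le_refl _, ?_⟩
  have : (z n : ℝ) ≤ (z n : ℝ) + 1 := by linarith
  exact mul_le_mul_of_nonneg_left this hε.le

lemma dist_le_cell {ε : ℝ} (hε : 0 ≤ ε) {z : Fin d → ℤ} {x y : EuclideanSpace ℝ (Fin d)}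
    (hx : x ∈ box d (fun n => ε * (z n : ℝ)) (fun n => ε * ((z n : ℝ) + 1)))
    (hy : y ∈ box d (fun n => ε * (z n : ℝ)) (fun n => ε * ((z n : ℝ) + 1))) :
    dist x y ≤ Real.sqrt d * ε := by
  rw [EuclideanSpace.dist_eq]
  have hcoord : ∀ n, dist (x n) (y n) ≤ ε := by
    intro n
    have h1 := hx n
    have h2 := hy n
    have := Real.dist_le_of_mem_Icc (x := x n) (y := y n)
      (Set.mem_Icc.2 ⟨h1.1, h1.2⟩) (Set.mem_Icc.2 ⟨h2.1, h2.2⟩)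
    calc dist (x n) (y n) ≤ ε * ((z n : ℝ) + 1) - ε * (z n : ℝ) := this
      _ = ε := by ring
  calc Real.sqrt (∑ n, dist (x n) (y n) ^ 2) ≤ Real.sqrt (∑ _n : Fin d, ε ^ 2) :=
        Real.sqrt_le_sqrt (Finset.sum_le_sum fun n _ =>
          pow_le_pow_left₀ dist_nonneg (hcoord n) 2)
    _ = Real.sqrt ((d : ℝ) * ε ^ 2) := by
        rw [Finset.sum_const, Finset.card_univ, Fintype.card_fin, nsmul_eq_mul]
    _ = Real.sqrt d * ε := by
        rw [Real.sqrt_mul (Nat.cast_nonneg d), Real.sqrt_sq hε]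

lemma cell_integral_zero (b : EuclideanSpace ℝ (Fin d) → ℝ)
    (hper : ∀ (y : EuclideanSpace ℝ (Fin d)) (z : Fin d → ℤ),
      b (y + (WithLp.equiv 2 (Fin d → ℝ)).symm (fun n => (z n : ℝ))) = b y)
    (hmean : (∫ y in {y : EuclideanSpace ℝ (Fin d) |
        ∀ n, 0 ≤ (WithLp.equiv 2 (Fin d → ℝ)) y n ∧
          (WithLp.equiv 2 (Fin d → ℝ)) y n ≤ 1}, b y) = 0)
    {ε : ℝ} (hε : 0 < ε) (z : Fin d → ℤ) :
    (∫ x in box d (fun n => ε * (z n : ℝ)) (fun n => ε * ((z n : ℝ) + 1)),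
      b (ε⁻¹ • x)) = 0 := by
  set Q1 : Set (EuclideanSpace ℝ (Fin d)) := {y : EuclideanSpace ℝ (Fin d) |
      ∀ n, 0 ≤ (WithLp.equiv 2 (Fin d → ℝ)) y n ∧
        (WithLp.equiv 2 (Fin d → ℝ)) y n ≤ 1} with hQ1def
  have hQ1meas : MeasurableSet Q1 := measurableSet_box (fun _ => (0:ℝ)) (fun _ => (1:ℝ))
  set c : EuclideanSpace ℝ (Fin d) :=
    (WithLp.equiv 2 (Fin d → ℝ)).symm (fun n => ε * (z n : ℝ)) with hcdef
  set B : Set (EuclideanSpace ℝ (Fin d)) :=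
    box d (fun n => ε * (z n : ℝ)) (fun n => ε * ((z n : ℝ) + 1)) with hBdef
  have hcoordc : ∀ n, (WithLp.equiv 2 (Fin d → ℝ)) c n = ε * (z n : ℝ) := by
    intro n; simp [hcdef]
  have hval : ∀ x : EuclideanSpace ℝ (Fin d), b (ε⁻¹ • (x + c)) = b (ε⁻¹ • x) := by
    intro x
    have hsc : ε⁻¹ • (x + c) = ε⁻¹ • x +
        (WithLp.equiv 2 (Fin d → ℝ)).symm (fun n => ((z n : ℤ) : ℝ)) := by
      rw [smul_add]
      congr 1
      apply (WithLp.equiv 2 (Fin d → ℝ)).injective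
      funext n
      simp only [Equiv.apply_symm_apply]
      show ε⁻¹ * ((WithLp.equiv 2 (Fin d → ℝ)) c n) = (z n : ℝ)
      rw [hcoordc n]
      field_simp
    rw [hsc, hper]
  have hmem : ∀ x : EuclideanSpace ℝ (Fin d), (x + c ∈ B) ↔ (ε⁻¹ • x ∈ Q1) := by
    intro x
    simp only [hBdef, hQ1def, box, Set.mem_setOf_eq]
    apply forall_congr'
    intro n
    have hadd : (WithLp.equiv 2 (Fin d → ℝ)) (x + c) n =
        (WithLp.equiv 2 (Fin d → ℝ)) x n + ε * (z n : ℝ) := by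
      rw [← hcoordc n]
      rfl
    have hsmul : (WithLp.equiv 2 (Fin d → ℝ)) (ε⁻¹ • x) n =
        ε⁻¹ * (WithLp.equiv 2 (Fin d → ℝ)) x n := rfl
    rw [hadd, hsmul]
    set t := (WithLp.equiv 2 (Fin d → ℝ)) x n with ht
    have hinv : ε * ε⁻¹ = 1 := mul_inv_cancel₀ hε.ne'
    have hinvpos : 0 < ε⁻¹ := inv_pos.mpr hε
    constructor
    · rintro ⟨h1, h2⟩
      constructor
      · nlinarith
      · nlinarith
    · rintro ⟨h1, h2⟩
      constructor
      · nlinarith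
      · nlinarith
  have hkey : ∀ x : EuclideanSpace ℝ (Fin d),
      B.indicator (fun u => b (ε⁻¹ • u)) (x + c) = Q1.indicator b (ε⁻¹ • x) := by
    intro x
    by_cases hx : ε⁻¹ • x ∈ Q1
    · rw [Set.indicator_of_mem ((hmem x).2 hx), Set.indicator_of_mem hx]
      exact hval x
    · rw [Set.indicator_of_notMem (fun hmem' => hx ((hmem x).1 hmem')),
        Set.indicator_of_notMem hx]
  calc (∫ x in B, b (ε⁻¹ • x))
      = ∫ x, B.indicator (fun u => b (ε⁻¹ • u)) x :=
        (integral_indicator (measurableSet_box _ _)).symm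
    _ = ∫ x, B.indicator (fun u => b (ε⁻¹ • u)) (x + c) :=
        (integral_add_right_eq_self _ c).symm
    _ = ∫ x, Q1.indicator b (ε⁻¹ • x) := by simp only [hkey]
    _ = |(ε⁻¹ ^ (Module.finrank ℝ (EuclideanSpace ℝ (Fin d))))⁻¹| •
          ∫ x, Q1.indicator b x := Measure.integral_comp_smul volume (Q1.indicator b) ε⁻¹
    _ = 0 := by
        rw [integral_indicator hQ1meas, hmean, smul_zero]

end Stmt17Aux

namespace Stmt17Aux

lemma S_finite {ε : ℝ} (hε : 0 < ε) {D : Set (EuclideanSpace ℝ (Fin d))}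
    (hDb : Bornology.IsBounded D) :
    {z : Fin d → ℤ |
      box d (fun n => ε * (z n : ℝ)) (fun n => ε * ((z n : ℝ) + 1)) ⊆ D}.Finite := by
  obtain ⟨r, hr⟩ := hDb.subset_closedBall 0
  apply Set.Finite.subset (Set.Finite.pi (t := fun _ : Fin d => Set.Icc (-⌈r / ε⌉) ⌈r / ε⌉)
    (fun n => Set.finite_Icc _ _))
  intro z hz
  rw [Set.mem_univ_pi]
  intro n
  have hpD : (WithLp.equiv 2 (Fin d → ℝ)).symm (fun n => ε * (z n : ℝ)) ∈ D :=
    hz (corner_mem hε z)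
  have hnorm : ‖(WithLp.equiv 2 (Fin d → ℝ)).symm (fun n => ε * (z n : ℝ))‖ ≤ r :=
    mem_closedBall_zero_iff.1 (hr hpD)
  have hco := coord_le_norm ((WithLp.equiv 2 (Fin d → ℝ)).symm (fun n => ε * (z n : ℝ))) n
  rw [Equiv.apply_symm_apply] at hco
  have habs : |ε * (z n : ℝ)| ≤ r := le_trans hco hnorm
  rw [abs_mul, abs_of_pos hε] at habs
  have hzr : |(z n : ℝ)| ≤ r / ε := by
    rw [le_div_iff₀ hε]; linarith [habs]
  have hceil : (r / ε : ℝ) ≤ (⌈r / ε⌉ : ℝ) := Int.le_ceil _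
  have h1 : ((z n : ℝ)) ≤ (⌈r / ε⌉ : ℝ) := le_trans (le_trans (le_abs_self _) hzr) hceil
  have h2 : -((⌈r / ε⌉ : ℝ)) ≤ (z n : ℝ) := by
    have := le_trans (neg_abs_le ((z n : ℝ))) (le_refl _)
    have h3 : -(r / ε) ≤ (z n : ℝ) := by
      have := neg_abs_le ((z n : ℝ))
      linarith [hzr]
    linarith [hceil]
  constructor
  · exact_mod_cast h2
  · exact_mod_cast h1

lemma continuousOn_of_holder {D : Set (EuclideanSpace ℝ (Fin d))}
    {v : EuclideanSpace ℝ (Fin d) → ℝ} {H η : ℝ} (hη : 0 < η)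
    (hvH : ∀ x ∈ D, ∀ y ∈ D, |v x - v y| ≤ H * dist x y ^ η) :
    ContinuousOn v D := by
  intro x hx
  have hdist : Filter.Tendsto (fun y : EuclideanSpace ℝ (Fin d) => dist y x)
      (nhdsWithin x D) (nhds 0) := by
    have h := (continuous_id.dist (continuous_const (y := x))).continuousWithinAt
      (s := D) (x := x)
    rw [ContinuousWithinAt] at h
    simpa [dist_self] using h
  have hrpow : Filter.Tendsto (fun t : ℝ => H * t ^ η) (nhds 0) (nhds 0) := by
    have h1 : ContinuousAt (fun t : ℝ => t ^ η) 0 :=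
      Real.continuousAt_rpow_const 0 η (Or.inr hη.le)
    have h2 : ContinuousAt (fun t : ℝ => H * t ^ η) 0 := continuousAt_const.mul h1
    have h0 : H * (0:ℝ) ^ η = 0 := by rw [Real.zero_rpow hη.ne', mul_zero]
    simpa [ContinuousAt, h0] using h2
  have hcomp : Filter.Tendsto (fun y : EuclideanSpace ℝ (Fin d) => H * dist y x ^ η)
      (nhdsWithin x D) (nhds 0) := hrpow.comp hdist
  have hv : Filter.Tendsto (fun y => dist (v y) (v x)) (nhdsWithin x D) (nhds 0) := by
    apply squeeze_zero' (Filter.Eventually.of_forall fun y => dist_nonneg) ?_ hcomp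
    filter_upwards [self_mem_nhdsWithin] with y hy
    rw [Real.dist_eq]
    exact hvH y hy x hx
  exact tendsto_iff_dist_tendsto_zero.2 hv

end Stmt17Aux

set_option maxHeartbeats 1000000 in
open Metric MeasureTheory Stmt17Aux in
/-- mean-zero oscillatory averaging estimate: a periodic mean-zero
weight `b(x/ε)` integrated against a Hölder function `v` over `D` is small. -/
theorem stmt_17 (d : ℕ) (hd : 1 ≤ d) (C1 Kb : ℝ) (hC1 : 0 < C1) (hKb : 0 ≤ Kb) :
    ∃ C > (0:ℝ), ∀ (b : EuclideanSpace ℝ (Fin d) → ℝ)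
      (D : Set (EuclideanSpace ℝ (Fin d))) (ε η H Kv : ℝ)
      (v : EuclideanSpace ℝ (Fin d) → ℝ),
      Measurable b → (∀ y, |b y| ≤ Kb) →
      (∀ (y : EuclideanSpace ℝ (Fin d)) (z : Fin d → ℤ),
        b (y + (WithLp.equiv 2 (Fin d → ℝ)).symm (fun n => (z n : ℝ))) = b y) →
      (∫ y in {y : EuclideanSpace ℝ (Fin d) |
          ∀ n, 0 ≤ (WithLp.equiv 2 (Fin d → ℝ)) y n ∧
            (WithLp.equiv 2 (Fin d → ℝ)) y n ≤ 1}, b y) = 0 →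
      MeasurableSet D → Bornology.IsBounded D →
      0 < ε → 0 < η → η ≤ 1 → 0 ≤ H → 0 ≤ Kv →
      (∀ x ∈ D, ∀ y ∈ D, |v x - v y| ≤ H * dist x y ^ η) →
      (∀ x ∈ D, |v x| ≤ Kv) →
      -- the part of `D` not covered by full `ε`-cells lies in the boundary layer
      ((D \ ⋃ z ∈ {z : Fin d → ℤ |
          {x : EuclideanSpace ℝ (Fin d) |
            ∀ n, ε * (z n : ℝ) ≤ (WithLp.equiv 2 (Fin d → ℝ)) x n ∧
              (WithLp.equiv 2 (Fin d → ℝ)) x n ≤ ε * ((z n : ℝ) + 1)} ⊆ D},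
          {x : EuclideanSpace ℝ (Fin d) |
            ∀ n, ε * (z n : ℝ) ≤ (WithLp.equiv 2 (Fin d → ℝ)) x n ∧
              (WithLp.equiv 2 (Fin d → ℝ)) x n ≤ ε * ((z n : ℝ) + 1)}) ⊆
        {x ∈ D | Metric.infDist x (frontier D) ≤ Real.sqrt d * ε}) →
      -- measure bound for the boundary layer
      (volume {x ∈ D | Metric.infDist x (frontier D) ≤ Real.sqrt d * ε}).toReal ≤
        C1 * ε * (volume D).toReal / Metric.diam D →
      |(volume D).toReal⁻¹ * ∫ x in D, b (ε⁻¹ • x) * v x| ≤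
        C * (ε ^ η * H + ε / Metric.diam D * Kv) := by
  have hd1 : (1:ℝ) ≤ Real.sqrt d := by
    rw [show (1:ℝ) = Real.sqrt 1 from (Real.sqrt_one).symm]
    exact Real.sqrt_le_sqrt (by exact_mod_cast hd)
  refine ⟨(Kb + 1) * (Real.sqrt d + C1), by nlinarith, ?_⟩
  intro b D ε η H Kv v hbm hbK hper hmean hDm hDb hε hη hη1 hH hKv hvH hvK hcover hlayer
  set C : ℝ := (Kb + 1) * (Real.sqrt d + C1) with hCdef
  have hC0 : 0 < C := by rw [hCdef]; nlinarith
  have hεη : (0:ℝ) ≤ ε ^ η := Real.rpow_nonneg hε.le η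
  have hqd : (0:ℝ) ≤ ε / diam D := div_nonneg hε.le diam_nonneg
  have hRHS0 : 0 ≤ C * (ε ^ η * H + ε / diam D * Kv) := by
    apply mul_nonneg hC0.le
    have := mul_nonneg hεη hH
    have := mul_nonneg hqd hKv
    linarith
  have hDfin : volume D < ⊤ := hDb.measure_lt_top
  set V := (volume D).toReal with hVdef
  rcases eq_or_lt_of_le (ENNReal.toReal_nonneg : (0:ℝ) ≤ V) with hV0 | hVpos
  · have hD0 : volume D = 0 := by
      rcases (ENNReal.toReal_eq_zero_iff _).1 hV0.symm with h | h
      · exact h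
      · exact absurd h hDfin.ne
    rw [Measure.restrict_eq_zero.2 hD0, integral_zero_measure]
    simpa using hRHS0
  -- main case
  set S : Set (Fin d → ℤ) :=
    {z : Fin d → ℤ | box d (fun n => ε * (z n : ℝ)) (fun n => ε * ((z n : ℝ) + 1)) ⊆ D}
    with hSdef
  set U : Set (EuclideanSpace ℝ (Fin d)) :=
    ⋃ z ∈ S, box d (fun n => ε * (z n : ℝ)) (fun n => ε * ((z n : ℝ) + 1)) with hUdef
  have hUD : U ⊆ D := Set.iUnion₂_subset fun z hz => hz
  have hUm : MeasurableSet U :=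
    MeasurableSet.biUnion (Set.to_countable S) (fun z _ => measurableSet_box _ _)
  set f := fun x : EuclideanSpace ℝ (Fin d) => b (ε⁻¹ • x) * v x with hfdef
  have hbmeas : Measurable fun x : EuclideanSpace ℝ (Fin d) => b (ε⁻¹ • x) :=
    hbm.comp (measurable_const_smul ε⁻¹)
  have hvc : ContinuousOn v D := continuousOn_of_holder hη hvH
  have hfmD : AEStronglyMeasurable f (volume.restrict D) :=
    (hbmeas.aemeasurable.mul (hvc.aemeasurable hDm)).aestronglyMeasurable
  have hbdD : ∀ᵐ x ∂(volume.restrict D), ‖f x‖ ≤ Kb * Kv := by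
    rw [ae_restrict_iff' hDm]
    filter_upwards with x hx
    rw [hfdef, Real.norm_eq_abs, abs_mul]
    exact mul_le_mul (hbK _) (hvK x hx) (abs_nonneg _) hKb
  have hfint : IntegrableOn f D := ⟨hfmD, HasFiniteIntegral.restrict_of_bounded _ hDfin hbdD⟩
  -- per-cell estimate
  set M2 : ℝ := H * ((Real.sqrt d * ε) ^ η) with hM2def
  have hM2 : 0 ≤ M2 := mul_nonneg hH (Real.rpow_nonneg (by positivity) η)
  set M1 : ℝ := Kb * M2 with hM1def
  have hM1 : 0 ≤ M1 := mul_nonneg hKb hM2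
  have hcell : ∀ z ∈ S,
      ‖∫ x in box d (fun n => ε * (z n : ℝ)) (fun n => ε * ((z n : ℝ) + 1)), f x‖ ≤
        M1 * (volume (box d (fun n => ε * (z n : ℝ)) (fun n => ε * ((z n : ℝ) + 1)))).toReal := by
    intro z hz
    set B := box d (fun n => ε * (z n : ℝ)) (fun n => ε * ((z n : ℝ) + 1)) with hBdef
    have hBD : B ⊆ D := hz
    have hBm : MeasurableSet B := measurableSet_box _ _
    have hBfin : volume B < ⊤ := lt_of_le_of_lt (measure_mono hBD) hDfin
    set p := (WithLp.equiv 2 (Fin d → ℝ)).symm (fun n => ε * (z n : ℝ)) with hpdef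
    have hpB : p ∈ B := corner_mem hε z
    have hpD : p ∈ D := hBD hpB
    have hint1 : IntegrableOn (fun x => b (ε⁻¹ • x)) B := by
      refine ⟨hbmeas.aestronglyMeasurable.restrict, HasFiniteIntegral.restrict_of_bounded (C := Kb) hBfin ?_⟩
      filter_upwards with x
      rw [Real.norm_eq_abs]; exact hbK _
    have hint2 : IntegrableOn (fun x => b (ε⁻¹ • x) * (v x - v p)) B := by
      have hfB : IntegrableOn f B := hfint.mono_set hBD
      have heq2 : (fun x => b (ε⁻¹ • x) * (v x - v p)) =
          fun x => f x - v p * b (ε⁻¹ • x) := by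
        funext x; rw [hfdef]; ring
      rw [heq2]
      exact hfB.sub (hint1.const_mul _)
    have hint0 : (∫ x in B, b (ε⁻¹ • x)) = 0 := cell_integral_zero b hper hmean hε z
    have heq : (∫ x in B, f x) = ∫ x in B, b (ε⁻¹ • x) * (v x - v p) := by
      have h1 : (∫ x in B, f x) =
          ∫ x in B, (b (ε⁻¹ • x) * (v x - v p) + v p * b (ε⁻¹ • x)) := by
        apply integral_congr_ae
        apply Filter.Eventually.of_forall
        intro x
        rw [hfdef]; ring
      rw [h1, integral_add hint2 (hint1.const_mul (v p)), integral_const_mul, hint0,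
        mul_zero, add_zero]
    rw [heq]
    apply norm_setIntegral_le_of_norm_le_const hBfin
    intro x hx
    have hxD : x ∈ D := hBD hx
    have hdist : dist x p ≤ Real.sqrt d * ε := dist_le_cell hε.le hx hpB
    have hvb : |v x - v p| ≤ M2 := by
      refine le_trans (hvH x hxD p hpD) ?_
      rw [hM2def]
      exact mul_le_mul_of_nonneg_left
        (Real.rpow_le_rpow dist_nonneg hdist hη.le) hH
    rw [Real.norm_eq_abs, abs_mul]
    exact mul_le_mul (hbK _) hvb (abs_nonneg _) hKb
  -- finiteness of S and sum over cells
  have hSfin : S.Finite := S_finite hε hDb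
  haveI : Fintype ↥S := hSfin.fintype
  set QQ : ↥S → Set (EuclideanSpace ℝ (Fin d)) :=
    fun i => box d (fun n => ε * (i.1 n : ℝ)) (fun n => ε * ((i.1 n : ℝ) + 1)) with hQQdef
  have hQQD : ∀ i : ↥S, QQ i ⊆ D := fun i => i.2
  have hUiU : U = ⋃ i : ↥S, QQ i := by
    rw [hUdef]
    exact Set.biUnion_eq_iUnion S _
  have hdisjQQ : Pairwise (Function.onFun (MeasureTheory.AEDisjoint volume) QQ) := by
    intro i j hij
    have hzz : i.1 ≠ j.1 := fun h => hij (Subtype.ext h)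
    obtain ⟨n, hn⟩ := Function.ne_iff.1 hzz
    rcases lt_or_gt_of_ne hn with hlt | hgt
    · refine measure_mono_null ?_ (hyperplane_null n (ε * (j.1 n : ℝ)))
      rintro x ⟨hxi, hxj⟩
      have h1 := (hxi n).2
      have h2 := (hxj n).1
      have hz1 : ((i.1 n : ℝ)) + 1 ≤ (j.1 n : ℝ) := by exact_mod_cast hlt
      have h3 : (WithLp.equiv 2 (Fin d → ℝ)) x n ≤ ε * (j.1 n : ℝ) :=
        le_trans h1 (mul_le_mul_of_nonneg_left hz1 hε.le)
      exact le_antisymm h3 h2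
    · refine measure_mono_null ?_ (hyperplane_null n (ε * (i.1 n : ℝ)))
      rintro x ⟨hxi, hxj⟩
      have h1 := (hxj n).2
      have h2 := (hxi n).1
      have hz1 : ((j.1 n : ℝ)) + 1 ≤ (i.1 n : ℝ) := by exact_mod_cast hgt
      have h3 : (WithLp.equiv 2 (Fin d → ℝ)) x n ≤ ε * (i.1 n : ℝ) :=
        le_trans h1 (mul_le_mul_of_nonneg_left hz1 hε.le)
      exact le_antisymm h3 h2
  have hQQnm : ∀ i : ↥S, MeasureTheory.NullMeasurableSet (QQ i) volume :=
    fun i => (measurableSet_box _ _).nullMeasurableSet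
  have hsum : (∫ x in U, f x) = ∑ i : ↥S, ∫ x in QQ i, f x := by
    rw [hUiU, integral_iUnion_ae hQQnm hdisjQQ (hUiU ▸ hfint.mono_set hUD), tsum_fintype]
  have hvolsum : (∑ i : ↥S, (volume (QQ i)).toReal) = (volume U).toReal := by
    have hne : ∀ i ∈ Finset.univ (α := ↥S), volume (QQ i) ≠ ⊤ :=
      fun i _ => (lt_of_le_of_lt (measure_mono (hQQD i)) hDfin).ne
    calc (∑ i : ↥S, (volume (QQ i)).toReal) = (∑ i : ↥S, volume (QQ i)).toReal :=
          (ENNReal.toReal_sum hne).symm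
      _ = (volume (⋃ i : ↥S, QQ i)).toReal := by
          rw [measure_iUnion₀ hdisjQQ hQQnm, tsum_fintype]
      _ = (volume U).toReal := by rw [← hUiU]
  have hnormU : ‖∫ x in U, f x‖ ≤ M1 * V := by
    rw [hsum]
    calc ‖∑ i : ↥S, ∫ x in QQ i, f x‖ ≤ ∑ i : ↥S, ‖∫ x in QQ i, f x‖ := norm_sum_le _ _
      _ ≤ ∑ i : ↥S, M1 * (volume (QQ i)).toReal :=
          Finset.sum_le_sum fun i _ => hcell i.1 i.2
      _ = M1 * ∑ i : ↥S, (volume (QQ i)).toReal := by rw [Finset.mul_sum]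
      _ ≤ M1 * V := by
          apply mul_le_mul_of_nonneg_left _ hM1
          rw [hvolsum, hVdef]
          exact ENNReal.toReal_mono hDfin.ne (measure_mono hUD)
  -- boundary layer
  have hDUm : MeasurableSet (D \ U) := hDm.diff hUm
  have hDUfin : volume (D \ U) < ⊤ := lt_of_le_of_lt (measure_mono Set.diff_subset) hDfin
  have hnormB : ‖∫ x in D \ U, f x‖ ≤ (Kb * Kv) * (volume (D \ U)).toReal := by
    apply norm_setIntegral_le_of_norm_le_const hDUfin
    intro x hx
    rw [hfdef, Real.norm_eq_abs, abs_mul]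
    exact mul_le_mul (hbK _) (hvK x hx.1) (abs_nonneg _) hKb
  have hcov' : D \ U ⊆ {x ∈ D | Metric.infDist x (frontier D) ≤ Real.sqrt d * ε} := hcover
  have hvolB : (volume (D \ U)).toReal ≤ C1 * ε * V / diam D := by
    refine le_trans (ENNReal.toReal_mono ?_ (measure_mono hcov')) hlayer
    exact (lt_of_le_of_lt (measure_mono (Set.sep_subset _ _)) hDfin).ne
  have htotal : |∫ x in D, f x| ≤ M1 * V + (Kb * Kv) * (C1 * ε * V / diam D) := by
    have hsplitD : (∫ x in D, f x) = (∫ x in U, f x) + ∫ x in D \ U, f x := by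
      rw [← integral_inter_add_diff hUm hfint, Set.inter_eq_self_of_subset_right hUD]
    rw [hsplitD]
    calc |(∫ x in U, f x) + ∫ x in D \ U, f x|
        = ‖(∫ x in U, f x) + ∫ x in D \ U, f x‖ := (Real.norm_eq_abs _).symm
      _ ≤ ‖∫ x in U, f x‖ + ‖∫ x in D \ U, f x‖ := norm_add_le _ _
      _ ≤ M1 * V + (Kb * Kv) * (C1 * ε * V / diam D) :=
          add_le_add hnormU (le_trans hnormB
            (mul_le_mul_of_nonneg_left hvolB (mul_nonneg hKb hKv)))
  have hVne : V ≠ 0 := ne_of_gt hVpos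
  have hsimp : V⁻¹ * (M1 * V + (Kb * Kv) * (C1 * ε * V / diam D)) =
      M1 + Kb * Kv * C1 * (ε / diam D) := by
    rcases eq_or_ne (diam D) 0 with hdiam | hdiam
    · rw [hdiam]
      simp [div_zero]
      field_simp
    · field_simp
  have hM1le : M1 ≤ C * (ε ^ η * H) := by
    have hsplitpow : (Real.sqrt d * ε) ^ η = Real.sqrt d ^ η * ε ^ η :=
      Real.mul_rpow (Real.sqrt_nonneg _) hε.le
    have hpow : Real.sqrt d ^ η ≤ Real.sqrt d := by
      calc Real.sqrt (d:ℝ) ^ η ≤ Real.sqrt (d:ℝ) ^ (1:ℝ) :=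
            Real.rpow_le_rpow_of_exponent_le hd1 hη1
        _ = Real.sqrt (d:ℝ) := Real.rpow_one _
    have e1 : M1 ≤ Kb * (H * (Real.sqrt d * ε ^ η)) := by
      rw [hM1def, hM2def, hsplitpow]
      apply mul_le_mul_of_nonneg_left _ hKb
      apply mul_le_mul_of_nonneg_left _ hH
      exact mul_le_mul_of_nonneg_right hpow hεη
    refine le_trans e1 ?_
    rw [hCdef]
    nlinarith [mul_nonneg (mul_nonneg hεη hH)
      (show (0:ℝ) ≤ Kb * C1 + Real.sqrt d + C1 by nlinarith [Real.sqrt_nonneg (d:ℝ)]),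
      mul_nonneg hεη hH]
  have hT2 : Kb * Kv * C1 * (ε / diam D) ≤ C * (ε / diam D * Kv) := by
    rw [hCdef]
    nlinarith [mul_nonneg (mul_nonneg hqd hKv)
      (show (0:ℝ) ≤ Kb * Real.sqrt d + Real.sqrt d + C1 by
        nlinarith [Real.sqrt_nonneg (d:ℝ)]),
      mul_nonneg hqd hKv]
  calc |V⁻¹ * ∫ x in D, f x| = V⁻¹ * |∫ x in D, f x| := by
        rw [abs_mul, abs_of_nonneg (inv_nonneg.2 ENNReal.toReal_nonneg)]
    _ ≤ V⁻¹ * (M1 * V + (Kb * Kv) * (C1 * ε * V / diam D)) :=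
        mul_le_mul_of_nonneg_left htotal (inv_nonneg.2 ENNReal.toReal_nonneg)
    _ = M1 + Kb * Kv * C1 * (ε / diam D) := hsimp
    _ ≤ C * (ε ^ η * H) + C * (ε / diam D * Kv) := add_le_add hM1le hT2
    _ = C * (ε ^ η * H + ε / diam D * Kv) := by ring
end
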